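/- arXiv:2404.10745 — 4 statements merged into one kernel-verified Lean document; each statement's English description precedes it below -/
import Mathlib

section
/- Let d ≥ 1, λ > 0, B > 0, and let φ_1, φ_2, …, φ_K ∈ ℝ^d be vectors with ‖φ_τ‖₂ ≤ B for all τ. For k ≥ 1 define U_k = λI + Σ_{τ=1}^{k-1} φ_τ φ_τᵀ. Then for every k ∈ [K], Σ_{τ=1}^{k} min{1, φ_τᵀ U_τ^{-1} φ_τ} ≤ 2 d log(1 + k B² / (d λ)). -/
/-!
For `x ≥ 0`, `min 1 x ≤ 2 log (1 + x)`. By the matrix determinant lemma,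
`det U (τ + 1) = det U τ * (1 + φ τᵀ (U τ)⁻¹ φ τ)`, so the sum of these logarithms telescopes to
`log det U (k + 1) - d log λ`. AM–GM on the eigenvalues bounds `log det U (k + 1)` by
`d log (tr U (k + 1) / d)`, and `tr U (k + 1) ≤ d λ + k B²`.
-/

open Matrix Finset

theorem min_one_le_two_mul_log_one_add {x : ℝ} (hx : 0 ≤ x) :
    min 1 x ≤ 2 * Real.log (1 + x) := by
  have hpos : 0 < 1 + x := by linarith
  have hlog : x / (1 + x) ≤ Real.log (1 + x) := by
    have h := Real.one_sub_inv_le_log_of_pos hpos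
    rwa [show 1 - (1 + x)⁻¹ = x / (1 + x) by field_simp; ring] at h
  rcases le_total x 1 with h | h
  · rw [min_eq_right h]
    have : x ≤ 2 * (x / (1 + x)) := by
      rw [mul_div_assoc', le_div_iff₀ hpos]; nlinarith
    linarith
  · rw [min_eq_left h]
    have : 1 / 2 ≤ x / (1 + x) := by rw [le_div_iff₀ hpos]; linarith
    linarith

theorem Finset.sum_log_le_card_mul_log_sum_div {ι : Type*} {s : Finset ι} (hs : s.Nonempty)
    {z : ι → ℝ} (hz : ∀ i ∈ s, 0 < z i) :
    ∑ i ∈ s, Real.log (z i) ≤ #s * Real.log ((∑ i ∈ s, z i) / #s) := by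
  have hcard : (0 : ℝ) < #s := by exact_mod_cast hs.card_pos
  have hjensen := strictConcaveOn_log_Ioi.concaveOn.le_map_sum (t := s)
    (w := fun _ => (#s : ℝ)⁻¹) (p := z) (fun _ _ => by positivity)
    (by rw [sum_const, nsmul_eq_mul, mul_inv_cancel₀ hcard.ne']) hz
  simp only [smul_eq_mul, inv_mul_eq_div, ← sum_div] at hjensen
  rwa [div_le_iff₀' hcard] at hjensen

namespace Matrix

variable {n : Type*} [Fintype n] [DecidableEq n]

theorem PosDef.log_det_le [Nonempty n] {A : Matrix n n ℝ} (hA : A.PosDef) :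
    Real.log A.det ≤ Fintype.card n * Real.log (A.trace / Fintype.card n) := by
  rw [hA.isHermitian.det_eq_prod_eigenvalues, hA.isHermitian.trace_eq_sum_eigenvalues]
  simp only [RCLike.ofReal_real_eq_id, id]
  rw [Real.log_prod fun i _ => (hA.eigenvalues_pos i).ne']
  exact sum_log_le_card_mul_log_sum_div univ_nonempty fun i _ => hA.eigenvalues_pos i

theorem PosDef.dotProduct_inv_mulVec_nonneg {A : Matrix n n ℝ} (hA : A.PosDef) (v : n → ℝ) :
    0 ≤ v ⬝ᵥ A⁻¹ *ᵥ v := by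
  simpa using hA.inv.posSemidef.dotProduct_mulVec_nonneg v

theorem det_add_vecMulVec {A : Matrix n n ℝ} (hA : IsUnit A.det) (u v : n → ℝ) :
    (A + vecMulVec u v).det = A.det * (1 + v ⬝ᵥ A⁻¹ *ᵥ u) := by
  have : A + vecMulVec u v = A * (1 + vecMulVec (A⁻¹ *ᵥ u) v) := by
    rw [Matrix.mul_add, Matrix.mul_one, vecMulVec_eq Unit, vecMulVec_eq Unit, ← Matrix.mul_assoc,
      ← replicateCol_mulVec, mulVec_mulVec, mul_nonsing_inv A hA, one_mulVec]
  rw [this, det_mul, vecMulVec_eq Unit, det_one_add_replicateCol_mul_replicateRow]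

end Matrix

section RegularizedGram

variable {n : Type*} [DecidableEq n] (lam : ℝ) (φ : ℕ → n → ℝ)

def regularizedGram (k : ℕ) : Matrix n n ℝ :=
  lam • 1 + ∑ τ ∈ Icc 1 (k - 1), vecMulVec (φ τ) (φ τ)

theorem regularizedGram_one : regularizedGram lam φ 1 = lam • 1 := by
  simp [regularizedGram]

theorem regularizedGram_succ {k : ℕ} (hk : 1 ≤ k) :
    regularizedGram lam φ (k + 1) = regularizedGram lam φ k + vecMulVec (φ k) (φ k) := by
  obtain ⟨m, rfl⟩ := Nat.exists_eq_add_of_le' hk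
  rw [regularizedGram, regularizedGram, Nat.add_sub_cancel, Nat.add_sub_cancel,
    sum_Icc_succ_top (by omega), add_assoc]

variable [Fintype n]

theorem trace_regularizedGram_succ (k : ℕ) :
    (regularizedGram lam φ (k + 1)).trace =
      Fintype.card n * lam + ∑ τ ∈ Icc 1 k, φ τ ⬝ᵥ φ τ := by
  simp [regularizedGram, trace_sum, mul_comm]

variable {lam}

theorem posDef_regularizedGram (hlam : 0 < lam) (k : ℕ) : (regularizedGram lam φ k).PosDef :=
  (PosDef.one.smul hlam).add_posSemidef <|
    posSemidef_sum _ fun τ _ => by simpa using posSemidef_vecMulVec_self_star (φ τ)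

theorem sum_log_one_add_eq_log_det_regularizedGram (hlam : 0 < lam) (k : ℕ) :
    ∑ τ ∈ Icc 1 k, Real.log (1 + φ τ ⬝ᵥ (regularizedGram lam φ τ)⁻¹ *ᵥ φ τ) =
      Real.log (regularizedGram lam φ (k + 1)).det - Fintype.card n * Real.log lam := by
  induction k with
  | zero => simp [regularizedGram_one, Real.log_pow]
  | succ k ih =>
    have hG := posDef_regularizedGram φ hlam (k + 1)
    have hquad := hG.dotProduct_inv_mulVec_nonneg (φ (k + 1))
    rw [sum_Icc_succ_top (by omega), ih, regularizedGram_succ lam φ (by omega : 1 ≤ k + 1),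
      det_add_vecMulVec hG.det_pos.ne'.isUnit, Real.log_mul hG.det_pos.ne' (by positivity)]
    ring

theorem log_det_regularizedGram_sub_le [Nonempty n] (hlam : 0 < lam) {B : ℝ}
    (hφ : ∀ τ, φ τ ⬝ᵥ φ τ ≤ B ^ 2) (k : ℕ) :
    Real.log (regularizedGram lam φ (k + 1)).det - Fintype.card n * Real.log lam ≤
      Fintype.card n * Real.log (1 + k * B ^ 2 / (Fintype.card n * lam)) := by
  set d : ℝ := (Fintype.card n : ℝ)
  have hd : 0 < d := by simp [d, Fintype.card_pos]
  have htrace : (regularizedGram lam φ (k + 1)).trace / d / lam ≤ 1 + k * B ^ 2 / (d * lam) := by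
    have : ∑ τ ∈ Icc 1 k, φ τ ⬝ᵥ φ τ ≤ k * B ^ 2 := by
      simpa using sum_le_sum fun τ (_ : τ ∈ Icc 1 k) => hφ τ
    rw [trace_regularizedGram_succ, div_div, div_le_iff₀ (by positivity)]
    field_simp
    linarith
  have hG := posDef_regularizedGram φ hlam (k + 1)
  have htrace_pos : 0 < (regularizedGram lam φ (k + 1)).trace / d := div_pos hG.trace_pos hd
  calc Real.log (regularizedGram lam φ (k + 1)).det - d * Real.log lam
      ≤ d * Real.log ((regularizedGram lam φ (k + 1)).trace / d) - d * Real.log lam := by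
        gcongr; exact hG.log_det_le
    _ = d * Real.log ((regularizedGram lam φ (k + 1)).trace / d / lam) := by
        rw [Real.log_div htrace_pos.ne' hlam.ne', mul_sub]
    _ ≤ d * Real.log (1 + k * B ^ 2 / (d * lam)) := by
        gcongr

end RegularizedGram

theorem stmt0_general (d K : ℕ) (hd : 1 ≤ d) (lam B : ℝ) (hlam : 0 < lam)
    (φ : ℕ → Fin d → ℝ)
    (hφ : ∀ τ, Real.sqrt (∑ i, φ τ i ^ 2) ≤ B)
    (U : ℕ → Matrix (Fin d) (Fin d) ℝ)
    (hU : ∀ k, U k = lam • (1 : Matrix (Fin d) (Fin d) ℝ) +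
      ∑ τ ∈ Finset.Icc 1 (k - 1), Matrix.vecMulVec (φ τ) (φ τ)) :
    ∀ k ∈ Finset.Icc 1 K,
      ∑ τ ∈ Finset.Icc 1 k, min 1 (φ τ ⬝ᵥ (U τ)⁻¹ *ᵥ φ τ) ≤
        2 * d * Real.log (1 + k * B ^ 2 / (d * lam)) := by
  intro k _
  obtain rfl : U = regularizedGram lam φ := funext hU
  have : Nonempty (Fin d) := ⟨⟨0, hd⟩⟩
  have hnorm : ∀ τ, φ τ ⬝ᵥ φ τ ≤ B ^ 2 := fun τ => by
    simpa [dotProduct, sq] using (Real.sqrt_le_iff.mp (hφ τ)).2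
  calc ∑ τ ∈ Icc 1 k, min 1 (φ τ ⬝ᵥ (regularizedGram lam φ τ)⁻¹ *ᵥ φ τ)
      ≤ ∑ τ ∈ Icc 1 k, 2 * Real.log (1 + φ τ ⬝ᵥ (regularizedGram lam φ τ)⁻¹ *ᵥ φ τ) :=
        sum_le_sum fun τ _ => min_one_le_two_mul_log_one_add
          ((posDef_regularizedGram φ hlam τ).dotProduct_inv_mulVec_nonneg (φ τ))
    _ = 2 * (Real.log (regularizedGram lam φ (k + 1)).det - d * Real.log lam) := by
        rw [← mul_sum, sum_log_one_add_eq_log_det_regularizedGram φ hlam, Fintype.card_fin]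
    _ ≤ 2 * d * Real.log (1 + k * B ^ 2 / (d * lam)) := by
        have := log_det_regularizedGram_sub_le φ hlam hnorm k
        rw [Fintype.card_fin] at this
        linarith

/-- Elliptic potential lemma (Lemma 11, Abbasi-Yadkori et al.):
for vectors `φ τ` with `‖φ τ‖₂ ≤ B` and `U k = λ I + ∑_{τ=1}^{k-1} φ τ (φ τ)ᵀ`,
`∑_{τ=1}^{k} min {1, ‖φ τ‖²_{(U τ)⁻¹}} ≤ 2 d log (1 + k B² / (d λ))`. -/
theorem stmt0 (d K : ℕ) (hd : 1 ≤ d) (lam B : ℝ) (hlam : 0 < lam) (hB : 0 < B)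
    (φ : ℕ → Fin d → ℝ)
    (hφ : ∀ τ, Real.sqrt (∑ i, φ τ i ^ 2) ≤ B)
    (U : ℕ → Matrix (Fin d) (Fin d) ℝ)
    (hU : ∀ k, U k = lam • (1 : Matrix (Fin d) (Fin d) ℝ) +
      ∑ τ ∈ Finset.Icc 1 (k - 1), Matrix.vecMulVec (φ τ) (φ τ)) :
    ∀ k ∈ Finset.Icc 1 K,
      ∑ τ ∈ Finset.Icc 1 k, min 1 (φ τ ⬝ᵥ (U τ)⁻¹ *ᵥ φ τ) ≤
        2 * d * Real.log (1 + k * B ^ 2 / (d * lam)) :=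
  stmt0_general d K hd lam B hlam φ hφ U hU
end

section
/- Let {φ_τ}_{τ=1}^{k-1} ⊂ ℝ^d be any vectors and {η_τ}_{τ=1}^{k-1} ⊂ ℝ be scalars with |η_τ| ≤ ζ for all τ. Let λ > 0 and define U_k = λI + Σ_{τ=1}^{k-1} φ_τ φ_τᵀ. Then ‖Σ_{τ=1}^{k-1} η_τ φ_τ‖_{U_k^{-1}} ≤ ζ √k. -/
/-!
With `y = U⁻¹ x` and `s = xᵀ U⁻¹ x`, write `s` in two ways. On the one hand
`s = yᵀ U y = λ ‖y‖² + ∑ (φ_τ ⬝ y)² ≥ ∑ (φ_τ ⬝ y)²`; on the other hand `s = ∑ η_τ (φ_τ ⬝ y)`,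
which by `|η_τ| ≤ ζ` and Cauchy–Schwarz is at most `ζ √k √(∑ (φ_τ ⬝ y)²) ≤ ζ √k √s`.
Dividing by `√s` gives `√s ≤ ζ √k`.
-/

open Matrix Finset

theorem Real.sqrt_le_of_le_mul_sqrt {s c : ℝ} (hc : 0 ≤ c) (h : s ≤ c * √s) : √s ≤ c := by
  rcases le_or_gt s 0 with hs | hs
  · rw [Real.sqrt_eq_zero'.mpr hs]
    exact hc
  · refine le_of_mul_le_mul_right ?_ (Real.sqrt_pos.mpr hs)
    rwa [Real.mul_self_sqrt hs.le]

theorem Finset.sum_mul_le_mul_sqrt_card_mul_sqrt_sum_sq {ι : Type*} {S : Finset ι}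
    {η a : ι → ℝ} {ζ : ℝ} (hη : ∀ τ ∈ S, |η τ| ≤ ζ) :
    ∑ τ ∈ S, η τ * a τ ≤ ζ * √(#S) * √(∑ τ ∈ S, a τ ^ 2) := by
  rcases S.eq_empty_or_nonempty with rfl | ⟨τ₀, hτ₀⟩
  · simp
  have hζ : 0 ≤ ζ := (abs_nonneg _).trans (hη τ₀ hτ₀)
  have hsum_abs : ∑ τ ∈ S, |a τ| ≤ √(#S) * √(∑ τ ∈ S, a τ ^ 2) := by
    rw [← Real.sqrt_mul (Nat.cast_nonneg _)]
    refine Real.le_sqrt_of_sq_le ?_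
    simpa only [sq_abs] using sq_sum_le_card_mul_sum_sq (s := S) (f := fun τ => |a τ|)
  calc ∑ τ ∈ S, η τ * a τ ≤ ∑ τ ∈ S, ζ * |a τ| := by
        refine sum_le_sum fun τ hτ => ?_
        calc η τ * a τ ≤ |η τ| * |a τ| := by rw [← abs_mul]; exact le_abs_self _
          _ ≤ ζ * |a τ| := by gcongr; exact hη τ hτ
    _ = ζ * ∑ τ ∈ S, |a τ| := by rw [mul_sum]
    _ ≤ ζ * √(#S) * √(∑ τ ∈ S, a τ ^ 2) := by rw [mul_assoc]; gcongr

namespace Matrix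

variable {n ι : Type*} [Fintype n] [DecidableEq n]

def regularizedGram {R : Type*} [CommRing R] (lam : R) (S : Finset ι) (φ : ι → n → R) :
    Matrix n n R :=
  lam • 1 + ∑ τ ∈ S, vecMulVec (φ τ) (φ τ)

theorem dotProduct_regularizedGram_mulVec {R : Type*} [CommRing R] (lam : R) (S : Finset ι)
    (φ : ι → n → R) (z : n → R) :
    z ⬝ᵥ regularizedGram lam S φ *ᵥ z = lam * (z ⬝ᵥ z) + ∑ τ ∈ S, (φ τ ⬝ᵥ z) ^ 2 := by
  simp [regularizedGram, add_mulVec, sum_mulVec, vecMulVec_mulVec, dotProduct_sum, smul_mulVec,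
    dotProduct_comm _ (φ _), sq]

theorem posDef_regularizedGram {lam : ℝ} (hlam : 0 < lam) (S : Finset ι) (φ : ι → n → ℝ) :
    (regularizedGram lam S φ).PosDef :=
  (PosDef.one.smul hlam).add_posSemidef <|
    posSemidef_sum S fun τ _ => by simpa using posSemidef_vecMulVec_self_star (φ τ)

theorem sqrt_dotProduct_inv_regularizedGram_mulVec_le {lam ζ : ℝ} (hlam : 0 < lam)
    (hζ : 0 ≤ ζ) {S : Finset ι} (φ : ι → n → ℝ) {η : ι → ℝ} (hη : ∀ τ ∈ S, |η τ| ≤ ζ) :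
    √((∑ τ ∈ S, η τ • φ τ) ⬝ᵥ (regularizedGram lam S φ)⁻¹ *ᵥ ∑ τ ∈ S, η τ • φ τ) ≤
      ζ * √(#S) := by
  set U := regularizedGram lam S φ
  set x := ∑ τ ∈ S, η τ • φ τ
  set y := U⁻¹ *ᵥ x
  have hUy : U *ᵥ y = x := by
    have hdet : IsUnit U.det :=
      (isUnit_iff_isUnit_det U).mp (posDef_regularizedGram hlam S φ).isUnit
    rw [mulVec_mulVec, mul_nonsing_inv U hdet, one_mulVec]
  have hquad : x ⬝ᵥ y = lam * (y ⬝ᵥ y) + ∑ τ ∈ S, (φ τ ⬝ᵥ y) ^ 2 := by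
    rw [← dotProduct_regularizedGram_mulVec, hUy, dotProduct_comm]
  have hlin : x ⬝ᵥ y = ∑ τ ∈ S, η τ * (φ τ ⬝ᵥ y) := by
    simp only [x, sum_dotProduct, smul_dotProduct, smul_eq_mul]
  have hsq_le : ∑ τ ∈ S, (φ τ ⬝ᵥ y) ^ 2 ≤ x ⬝ᵥ y := by
    have : 0 ≤ y ⬝ᵥ y := by simpa using dotProduct_self_star_nonneg y
    rw [hquad]
    nlinarith
  refine Real.sqrt_le_of_le_mul_sqrt (by positivity) ?_
  calc x ⬝ᵥ y = ∑ τ ∈ S, η τ * (φ τ ⬝ᵥ y) := hlin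
    _ ≤ ζ * √(#S) * √(∑ τ ∈ S, (φ τ ⬝ᵥ y) ^ 2) := sum_mul_le_mul_sqrt_card_mul_sqrt_sum_sq hη
    _ ≤ ζ * √(#S) * √(x ⬝ᵥ y) := by gcongr

end Matrix

theorem stmt1_general (d k : ℕ) (lam ζ : ℝ) (hlam : 0 < lam) (hζ : 0 ≤ ζ)
    (φ : ℕ → Fin d → ℝ) (η : ℕ → ℝ)
    (hη : ∀ τ ∈ Finset.Icc 1 (k - 1), |η τ| ≤ ζ)
    (U : Matrix (Fin d) (Fin d) ℝ)
    (hU : U = lam • (1 : Matrix (Fin d) (Fin d) ℝ) +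
      ∑ τ ∈ Finset.Icc 1 (k - 1), Matrix.vecMulVec (φ τ) (φ τ))
    (x : Fin d → ℝ)
    (hx : x = ∑ τ ∈ Finset.Icc 1 (k - 1), η τ • φ τ) :
    Real.sqrt (x ⬝ᵥ U⁻¹ *ᵥ x) ≤ ζ * Real.sqrt k := by
  subst hU hx
  have hcard : (#(Icc 1 (k - 1)) : ℝ) ≤ k := by
    rw [Nat.card_Icc]
    exact_mod_cast (by omega : k - 1 + 1 - 1 ≤ k)
  calc _ ≤ ζ * √(#(Icc 1 (k - 1))) := sqrt_dotProduct_inv_regularizedGram_mulVec_le hlam hζ φ hη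
    _ ≤ ζ * √k := by gcongr

/-- Lemma 8 of Zanette et al.: for vectors `φ τ` and scalars `η τ` with `|η τ| ≤ ζ`,
with `U k = λ I + ∑_{τ=1}^{k-1} φ τ (φ τ)ᵀ`, we have
`‖∑_{τ=1}^{k-1} η τ • φ τ‖_{(U k)⁻¹} ≤ ζ √k`. -/
theorem stmt1 (d k : ℕ) (hd : 1 ≤ d) (lam ζ : ℝ) (hlam : 0 < lam) (hζ : 0 ≤ ζ)
    (φ : ℕ → Fin d → ℝ) (η : ℕ → ℝ)
    (hη : ∀ τ ∈ Finset.Icc 1 (k - 1), |η τ| ≤ ζ)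
    (U : Matrix (Fin d) (Fin d) ℝ)
    (hU : U = lam • (1 : Matrix (Fin d) (Fin d) ℝ) +
      ∑ τ ∈ Finset.Icc 1 (k - 1), Matrix.vecMulVec (φ τ) (φ τ))
    (x : Fin d → ℝ)
    (hx : x = ∑ τ ∈ Finset.Icc 1 (k - 1), η τ • φ τ) :
    Real.sqrt (x ⬝ᵥ U⁻¹ *ᵥ x) ≤ ζ * Real.sqrt k :=
  stmt1_general d k lam ζ hlam hζ φ η hη U hU x hx
end

section
/- Let {η_k}_{k=1}^K be a martingale difference sequence adapted to a filtration {F_k} with |η_k| ≤ M and E[η_k | F_k] = 0, and suppose Var[η_k | F_k] ≤ v_k. Then for any a > 0 and v > 0, P(Σ_{k=1}^K η_k ≥ a and Σ_{k=1}^K Var[η_k|F_k] ≤ v) ≤ exp(−a² / (2v + 2aM/3)). -/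
/-!
For `|u| ≤ c < 3`, comparing the tail of the exponential series with a geometric series
(`(n + 2)! ≥ 2 * 3 ^ n`) gives `exp u ≤ 1 + u + u² / (2 (1 - c / 3))`. Applied to `u = l η_k`
with `0 ≤ l` and `l M < 3`, and using `E[η_k | F_k] = 0`, this yields
`E[exp (l η_k) | F_k] ≤ exp (g W_k)` with `g = l² / (2 (1 - l M / 3))` and `W_k = E[η_k² | F_k]`.
Hence `exp (l S_n - g V_n)`, with `S_n = ∑_{k<n} η_k` and `V_n = ∑_{k<n} W_k`, is a supermartingale
starting at `1`, and Markov's inequality bounds the event `{a ≤ S_K, V_K ≤ v}` by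
`exp (-(l a - g v))`. The choice `l = a / (v + a M / 3)` turns the exponent into
`a² / (2 v + 2 a M / 3)`.
-/

open MeasureTheory Finset Real
open scoped Nat

theorem Real.exp_le_one_add_add_sq_div {u c : ℝ} (hu : |u| ≤ c) (hc : c < 3) :
    exp u ≤ 1 + u + u ^ 2 / (2 * (1 - c / 3)) := by
  have hc0 : 0 ≤ c := (abs_nonneg u).trans hu
  have hc1 : c / 3 < 1 := by linarith
  have hsum := summable_pow_div_factorial u
  have hterm (n : ℕ) : u ^ (n + 2) / (n + 2)! ≤ u ^ 2 / 2 * (c / 3) ^ n := by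
    have hfac : (2 * 3 ^ n : ℝ) ≤ (n + 2)! := by
      exact_mod_cast (by simpa [add_comm] using @Nat.factorial_mul_pow_le_factorial 2 n :
        2 * 3 ^ n ≤ (n + 2)!)
    have hpow : u ^ (n + 2) ≤ u ^ 2 * c ^ n := by
      rw [pow_add, mul_comm]
      refine mul_le_mul_of_nonneg_left ?_ (sq_nonneg u)
      exact (le_abs_self _).trans ((abs_pow u n).le.trans (pow_le_pow_left₀ (abs_nonneg u) hu n))
    calc u ^ (n + 2) / (n + 2)! ≤ u ^ 2 * c ^ n / (2 * 3 ^ n) :=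
          div_le_div₀ (by positivity) hpow (by positivity) hfac
    _ = u ^ 2 / 2 * (c / 3) ^ n := by rw [div_pow]; ring
  calc exp u = 1 + u + ∑' n : ℕ, u ^ (n + 2) / (n + 2)! := by
        rw [exp_eq_exp_ℝ, NormedSpace.exp_eq_tsum_div]
        beta_reduce
        rw [← hsum.sum_add_tsum_nat_add 2]
        simp [sum_range_succ]
  _ ≤ 1 + u + ∑' n : ℕ, u ^ 2 / 2 * (c / 3) ^ n :=
        add_le_add_right (((summable_nat_add_iff 2).2 hsum).tsum_le_tsum hterm
          ((summable_geometric_of_lt_one (by positivity) hc1).mul_left _)) _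
  _ = 1 + u + u ^ 2 / (2 * (1 - c / 3)) := by
        rw [tsum_mul_left, tsum_geometric_of_lt_one (by positivity) hc1, ← div_eq_mul_inv, div_div]

noncomputable def bernsteinCoeff (M l : ℝ) : ℝ := l ^ 2 / (2 * (1 - l * M / 3))

lemma bernsteinCoeff_nonneg {M l : ℝ} (hlM : l * M < 3) : 0 ≤ bernsteinCoeff M l := by
  unfold bernsteinCoeff
  have : 0 < 1 - l * M / 3 := by linarith
  positivity

section

variable {Ω : Type*} {m m0 : MeasurableSpace Ω} {μ : Measure Ω}

lemma integrable_exp_mul_of_ae_abs_le [IsFiniteMeasure μ] {X : Ω → ℝ} {M : ℝ}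
    (hX : AEStronglyMeasurable X μ) (hXM : ∀ᵐ ω ∂μ, |X ω| ≤ M) (l : ℝ) :
    Integrable (fun ω ↦ exp (l * X ω)) μ :=
  .of_bound (by fun_prop) (exp (|l| * M)) <| by
    filter_upwards [hXM] with ω hω
    rw [norm_of_nonneg (exp_nonneg _), exp_le_exp]
    exact (le_abs_self _).trans
      ((abs_mul l _).trans_le (mul_le_mul_of_nonneg_left hω (abs_nonneg l)))

theorem condExp_exp_mul_le_exp_mul_condExp_sq [IsFiniteMeasure μ] (hm : m ≤ m0)
    {X : Ω → ℝ} {M l : ℝ} (hX : AEStronglyMeasurable X μ) (hXM : ∀ᵐ ω ∂μ, |X ω| ≤ M)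
    (hX0 : μ[X | m] =ᵐ[μ] 0) (hl : 0 ≤ l) (hlM : l * M < 3) :
    μ[fun ω ↦ exp (l * X ω) | m] ≤ᵐ[μ]
      fun ω ↦ exp (bernsteinCoeff M l * μ[fun ω ↦ X ω ^ 2 | m] ω) := by
  set g := bernsteinCoeff M l
  set X2 : Ω → ℝ := fun ω ↦ X ω ^ 2
  have hXint : Integrable X μ := .of_bound hX M (by simpa using hXM)
  have hX2int : Integrable X2 μ := .of_bound (hX.pow 2) (M ^ 2) <| by
    filter_upwards [hXM] with ω hω
    simpa [X2] using pow_le_pow_left₀ (abs_nonneg _) hω 2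
  have hpt : (fun ω ↦ exp (l * X ω)) ≤ᵐ[μ] (fun _ ↦ 1) + l • X + g • X2 := by
    filter_upwards [hXM] with ω hω
    have hu : |l * X ω| ≤ l * M := by
      rw [abs_mul, abs_of_nonneg hl]; exact mul_le_mul_of_nonneg_left hω hl
    calc exp (l * X ω) ≤ 1 + l * X ω + (l * X ω) ^ 2 / (2 * (1 - l * M / 3)) :=
          exp_le_one_add_add_sq_div hu hlM
    _ = _ := by
          simp only [Pi.add_apply, Pi.smul_apply, smul_eq_mul, g, X2, bernsteinCoeff]; ring
  have hcond : μ[(fun _ ↦ 1) + l • X + g • X2 | m] =ᵐ[μ] fun ω ↦ 1 + g * μ[X2 | m] ω := by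
    filter_upwards [condExp_add ((integrable_const 1).add (hXint.smul l)) (hX2int.smul g) m,
      condExp_add (integrable_const 1) (hXint.smul l) m, condExp_smul l X m,
      condExp_smul g X2 m, hX0] with ω h1 h2 h3 h4 h5
    simp [h1, h2, h3, h4, h5, condExp_const hm]
  filter_upwards [condExp_mono (integrable_exp_mul_of_ae_abs_le hX hXM l)
    (((integrable_const 1).add (hXint.smul l)).add (hX2int.smul g)) hpt, hcond] with ω h1 h2
  exact h1.trans (h2.trans_le (by linarith [add_one_le_exp (g * μ[X2 | m] ω)]))

noncomputable def freedmanProcess (μ : Measure Ω) (ℱ : Filtration ℕ m0) (η : ℕ → Ω → ℝ)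
    (l g : ℝ) (n : ℕ) (ω : Ω) : ℝ :=
  exp (l * ∑ k ∈ range n, η k ω - g * ∑ k ∈ range n, μ[fun ω' ↦ η k ω' ^ 2 | ℱ k] ω)

variable {ℱ : Filtration ℕ m0} {η : ℕ → Ω → ℝ} {M l g : ℝ}

lemma freedmanProcess_succ (n : ℕ) (ω : Ω) :
    freedmanProcess μ ℱ η l g (n + 1) ω = freedmanProcess μ ℱ η l g n ω *
      exp (-(g * μ[fun ω' ↦ η n ω' ^ 2 | ℱ n] ω)) * exp (l * η n ω) := by
  simp only [freedmanProcess, sum_range_succ, ← exp_add]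
  ring_nf

lemma stronglyAdapted_freedmanProcess (hadapt : ∀ k, StronglyMeasurable[ℱ (k + 1)] (η k)) :
    StronglyAdapted ℱ (freedmanProcess μ ℱ η l g) := by
  intro n
  have hS : StronglyMeasurable[ℱ n] fun ω ↦ ∑ k ∈ range n, η k ω :=
    Finset.stronglyMeasurable_fun_sum _ fun k hk ↦ (hadapt k).mono (ℱ.mono (mem_range.mp hk))
  have hV : StronglyMeasurable[ℱ n] fun ω ↦ ∑ k ∈ range n, μ[fun ω' ↦ η k ω' ^ 2 | ℱ k] ω :=
    Finset.stronglyMeasurable_fun_sum _ fun k hk ↦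
      stronglyMeasurable_condExp.mono (ℱ.mono (mem_range.mp hk).le)
  exact continuous_exp.comp_stronglyMeasurable ((hS.const_mul l).sub (hV.const_mul g))

lemma integrable_freedmanProcess [IsFiniteMeasure μ]
    (hadapt : ∀ k, StronglyMeasurable[ℱ (k + 1)] (η k))
    (hbound : ∀ k, ∀ᵐ ω ∂μ, |η k ω| ≤ M) (hl : 0 ≤ l) (hg : 0 ≤ g) (n : ℕ) :
    Integrable (freedmanProcess μ ℱ η l g n) μ := by
  refine .of_bound
    ((stronglyAdapted_freedmanProcess hadapt n).mono (ℱ.le n)).aestronglyMeasurable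
    (exp (l * (n * M))) ?_
  have hW : ∀ k, ∀ᵐ ω ∂μ, 0 ≤ μ[fun ω' ↦ η k ω' ^ 2 | ℱ k] ω := fun k ↦
    condExp_nonneg (ae_of_all _ fun ω ↦ sq_nonneg _)
  filter_upwards [ae_all_iff.mpr hbound, ae_all_iff.mpr hW] with ω hηω hWω
  rw [freedmanProcess, norm_of_nonneg (exp_nonneg _), exp_le_exp]
  have hS : ∑ k ∈ range n, η k ω ≤ n * M := by
    simpa using sum_le_sum fun k (_ : k ∈ range n) ↦ le_of_abs_le (hηω k)
  have hV : 0 ≤ ∑ k ∈ range n, μ[fun ω' ↦ η k ω' ^ 2 | ℱ k] ω := sum_nonneg fun k _ ↦ hWω k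
  nlinarith [mul_le_mul_of_nonneg_left hS hl, mul_nonneg hg hV]

lemma condExp_freedmanProcess_succ_le [IsFiniteMeasure μ]
    (hadapt : ∀ k, StronglyMeasurable[ℱ (k + 1)] (η k))
    (hbound : ∀ k, ∀ᵐ ω ∂μ, |η k ω| ≤ M) (hmean : ∀ k, μ[η k | ℱ k] =ᵐ[μ] 0)
    (hl : 0 ≤ l) (hlM : l * M < 3) (n : ℕ) :
    μ[freedmanProcess μ ℱ η l (bernsteinCoeff M l) (n + 1) | ℱ n] ≤ᵐ[μ]
      freedmanProcess μ ℱ η l (bernsteinCoeff M l) n := by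
  set g := bernsteinCoeff M l
  set W := μ[fun ω' ↦ η n ω' ^ 2 | ℱ n]
  set f : Ω → ℝ := fun ω ↦ freedmanProcess μ ℱ η l g n ω * exp (-(g * W ω))
  have hf : StronglyMeasurable[ℱ n] f := (stronglyAdapted_freedmanProcess hadapt n).mul
    (continuous_exp.comp_stronglyMeasurable (stronglyMeasurable_condExp.const_mul g).neg)
  have hsucc : freedmanProcess μ ℱ η l g (n + 1) = f * fun ω ↦ exp (l * η n ω) :=
    funext (freedmanProcess_succ n)
  have hηm : AEStronglyMeasurable (η n) μ := ((hadapt n).mono (ℱ.le _)).aestronglyMeasurable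
  rw [hsucc]
  filter_upwards [condExp_mul_of_stronglyMeasurable_left hf
      (hsucc ▸ integrable_freedmanProcess hadapt hbound hl (bernsteinCoeff_nonneg hlM) (n + 1))
      (integrable_exp_mul_of_ae_abs_le hηm (hbound n) l),
    condExp_exp_mul_le_exp_mul_condExp_sq (ℱ.le n) hηm (hbound n) (hmean n) hl hlM]
    with ω hpull hmgf
  rw [hpull, Pi.mul_apply]
  calc f ω * μ[fun ω ↦ exp (l * η n ω) | ℱ n] ω ≤ f ω * exp (g * W ω) :=
        mul_le_mul_of_nonneg_left hmgf (mul_nonneg (exp_nonneg _) (exp_nonneg _))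
  _ = freedmanProcess μ ℱ η l g n ω := by
        rw [mul_assoc, ← exp_add, neg_add_cancel, exp_zero, mul_one]

theorem supermartingale_freedmanProcess [IsFiniteMeasure μ]
    (hadapt : ∀ k, StronglyMeasurable[ℱ (k + 1)] (η k))
    (hbound : ∀ k, ∀ᵐ ω ∂μ, |η k ω| ≤ M) (hmean : ∀ k, μ[η k | ℱ k] =ᵐ[μ] 0)
    (hl : 0 ≤ l) (hlM : l * M < 3) :
    Supermartingale (freedmanProcess μ ℱ η l (bernsteinCoeff M l)) ℱ μ :=
  supermartingale_nat (stronglyAdapted_freedmanProcess hadapt)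
    (integrable_freedmanProcess hadapt hbound hl (bernsteinCoeff_nonneg hlM))
    (condExp_freedmanProcess_succ_le hadapt hbound hmean hl hlM)

theorem measure_sum_ge_and_sum_condExp_sq_le [IsProbabilityMeasure μ]
    (hadapt : ∀ k, StronglyMeasurable[ℱ (k + 1)] (η k))
    (hbound : ∀ k, ∀ᵐ ω ∂μ, |η k ω| ≤ M) (hmean : ∀ k, μ[η k | ℱ k] =ᵐ[μ] 0)
    (hl : 0 ≤ l) (hlM : l * M < 3) (K : ℕ) (a v : ℝ) :
    μ {ω | a ≤ ∑ k ∈ range K, η k ω ∧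
        ∑ k ∈ range K, (μ[fun ω' => (η k ω') ^ 2 | ℱ k]) ω ≤ v} ≤
      ENNReal.ofReal (exp (-(l * a - bernsteinCoeff M l * v))) := by
  set g := bernsteinCoeff M l
  set G := freedmanProcess μ ℱ η l g
  have hG := supermartingale_freedmanProcess hadapt hbound hmean hl hlM
  have hGK : ∫ ω, G K ω ∂μ ≤ 1 := by
    simpa [G, freedmanProcess] using hG.setIntegral_le K.zero_le MeasurableSet.univ
  have hg : 0 ≤ g := bernsteinCoeff_nonneg hlM
  have hmarkov := mul_meas_ge_le_integral_of_nonneg (ae_of_all _ fun ω ↦ (exp_pos _).le)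
    (hG.integrable K) (exp (l * a - g * v))
  rw [ENNReal.le_ofReal_iff_toReal_le (measure_ne_top _ _) (exp_nonneg _), ← measureReal_def]
  calc μ.real _ ≤ μ.real {ω | exp (l * a - g * v) ≤ G K ω} :=
        measureReal_mono <| by
          rintro ω ⟨hS, hV⟩
          exact exp_le_exp.mpr (by gcongr)
  _ ≤ 1 / exp (l * a - g * v) := (le_div_iff₀' (exp_pos _)).mpr (hmarkov.trans hGK)
  _ = exp (-(l * a - g * v)) := by rw [exp_neg, one_div]

end

/-- Freedman's inequality: if `{η_k}` is a martingale difference sequence with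
`|η_k| ≤ M` and zero conditional mean, then for any `a, v > 0`,
`P(∑_{k<K} η_k ≥ a and ∑_{k<K} Var[η_k | F_k] ≤ v) ≤ exp(−a²/(2v + 2aM/3))`. -/
theorem stmt15 {Ω : Type*} {m0 : MeasurableSpace Ω} (μ : Measure Ω) [IsProbabilityMeasure μ]
    (ℱ : Filtration ℕ m0) (η : ℕ → Ω → ℝ) (K : ℕ) (M : ℝ) (hM : 0 < M)
    (hadapt : ∀ k, StronglyMeasurable[ℱ (k + 1)] (η k))
    (hbound : ∀ k, ∀ᵐ ω ∂μ, |η k ω| ≤ M)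
    (hmean : ∀ k, μ[η k | ℱ k] =ᵐ[μ] 0)
    (a v : ℝ) (ha : 0 < a) (hv : 0 < v) :
    μ {ω | a ≤ ∑ k ∈ Finset.range K, η k ω ∧
        ∑ k ∈ Finset.range K, (μ[fun ω' => (η k ω') ^ 2 | ℱ k]) ω ≤ v} ≤
      ENNReal.ofReal (Real.exp (-a ^ 2 / (2 * v + 2 * a * M / 3))) := by
  have hden : 0 < v + a * M / 3 := by positivity
  set l := a / (v + a * M / 3)
  have hlM : l * M < 3 := by
    rw [div_mul_eq_mul_div, div_lt_iff₀ hden]; nlinarith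
  have hexponent : -(l * a - bernsteinCoeff M l * v) = -a ^ 2 / (2 * v + 2 * a * M / 3) := by
    have hslack : 1 - l * M / 3 = v / (v + a * M / 3) := by
      simp only [l]; field_simp; ring
    rw [bernsteinCoeff, hslack]
    simp only [l]; field_simp; ring
  simpa only [hexponent] using
    measure_sum_ge_and_sum_condExp_sq_le hadapt hbound hmean (by positivity) hlM K a v
end

section
/- Let ε > 0, H ≥ 1, ζ ∈ (0, 1), and χ = 12√d·H for an integer d ≥ 1. Define L_ε as the minimal positive integer with 2^{−L_ε} ≤ 0.01·ε/H, and L_ζ as the maximal positive integer with 2^{−L_ζ} ≥ χ·L_ζ^{1.5}·ζ (assuming such an integer exists). If ε ≥ C·√d·H²·ζ·log²(1/ζ) for a sufficiently large absolute constant C, then L_ε ≤ L_ζ. -/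
/-!
Rather than bounding `L_ε` directly, we show that `L_ζ` itself meets the precision threshold
`2^{-L_ζ} ≤ 0.01 ε / H`, so minimality of `L_ε` gives `L_ε ≤ L_ζ`. By maximality of `L_ζ`
its defining inequality fails at `L_ζ + 1`, whence `2^{-L_ζ} < 2χ (L_ζ + 1)^{1.5} ζ ≤ 8χ L_ζ² ζ`;
and since `χ L_ζ^{1.5} ≥ 1`, the defining inequality of `L_ζ` gives `ζ ≤ 2^{-L_ζ}`, i.e.
`L_ζ ≤ log₂(1/ζ)`. Hence `2^{-L_ζ} ≤ 96 √d H L_ζ² ζ ≤ 0.01 ε / H` as soon as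
`ε ≥ 9600 √d H² ζ log₂²(1/ζ)`.
-/

open Real

lemma natCast_le_logb_one_div {b ζ : ℝ} {n : ℕ} (hb : 1 < b) (hζ : 0 < ζ)
    (h : ζ ≤ b ^ (-(n : ℤ))) : (n : ℝ) ≤ logb b (1 / ζ) := by
  rw [le_logb_iff_rpow_le hb (one_div_pos.mpr hζ), rpow_natCast, le_div_iff₀ hζ]
  rw [zpow_neg, zpow_natCast] at h
  calc b ^ n * ζ ≤ b ^ n * (b ^ n)⁻¹ := by gcongr
    _ = 1 := mul_inv_cancel₀ (by positivity)

lemma add_one_rpow_three_halves_le {x : ℝ} (hx : 1 ≤ x) :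
    (x + 1) ^ (1.5 : ℝ) ≤ 4 * x ^ 2 :=
  calc (x + 1) ^ (1.5 : ℝ) ≤ (x + 1) ^ (2 : ℝ) :=
        rpow_le_rpow_of_exponent_le (by linarith) (by norm_num)
    _ = (x + 1) ^ 2 := rpow_two _
    _ ≤ 4 * x ^ 2 := by nlinarith

section Misspecification

variable {χ ζ : ℝ} {n : ℕ}

lemma natCast_le_logb_one_div_of_mul_rpow_le (hχ : 1 ≤ χ) (hn : 1 ≤ n) (hζ : 0 < ζ)
    (h : χ * (n : ℝ) ^ (1.5 : ℝ) * ζ ≤ (2 : ℝ) ^ (-(n : ℤ))) :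
    (n : ℝ) ≤ logb 2 (1 / ζ) := by
  have hn' : (1 : ℝ) ≤ (n : ℝ) ^ (1.5 : ℝ) :=
    one_le_rpow (by exact_mod_cast hn) (by norm_num)
  refine natCast_le_logb_one_div one_lt_two hζ (le_trans ?_ h)
  calc ζ = 1 * 1 * ζ := by ring
    _ ≤ χ * (n : ℝ) ^ (1.5 : ℝ) * ζ := by gcongr

lemma two_zpow_neg_lt_of_maximal (hχ : 0 ≤ χ) (hn : 1 ≤ n) (hζ : 0 < ζ)
    (hmax : ∀ m : ℕ, 1 ≤ m → χ * (m : ℝ) ^ (1.5 : ℝ) * ζ ≤ (2 : ℝ) ^ (-(m : ℤ)) → m ≤ n) :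
    (2 : ℝ) ^ (-(n : ℤ)) < 8 * χ * n ^ 2 * ζ := by
  have hsucc : (2 : ℝ) ^ (-((n + 1 : ℕ) : ℤ)) = (2 : ℝ) ^ (-(n : ℤ)) / 2 := by
    rw [Nat.cast_succ, neg_add, zpow_add₀ two_ne_zero, zpow_neg_one, div_eq_mul_inv]
  have hnext : (2 : ℝ) ^ (-(n : ℤ)) / 2 < χ * ((n : ℝ) + 1) ^ (1.5 : ℝ) * ζ := by
    by_contra! h
    have := hmax (n + 1) (by omega) (by rw [hsucc]; exact_mod_cast h)
    omega
  have hpow := add_one_rpow_three_halves_le (x := (n : ℝ)) (by exact_mod_cast hn)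
  calc (2 : ℝ) ^ (-(n : ℤ)) < 2 * (χ * ((n : ℝ) + 1) ^ (1.5 : ℝ) * ζ) := by linarith
    _ ≤ 2 * (χ * (4 * (n : ℝ) ^ 2) * ζ) := by gcongr
    _ = 8 * χ * n ^ 2 * ζ := by ring

end Misspecification

/-- Interplay between precision and misspecification (Lemma on `𝒢_ε`): with
`χ = 12√d·H`, `L_ε` the minimal positive integer with `2^{-L_ε} ≤ 0.01 ε / H`, and
`L_ζ` the maximal positive integer with `2^{-L_ζ} ≥ χ L_ζ^{1.5} ζ` (assumed to exist),
there is an absolute constant `C > 0` such that whenever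
`ε ≥ C √d H² ζ log₂²(1/ζ)`, we have `L_ε ≤ L_ζ`. -/
theorem stmt17 : ∃ C : ℝ, 0 < C ∧
    ∀ (d H : ℕ), 1 ≤ d → 1 ≤ H → ∀ ζ ε : ℝ, 0 < ζ → ζ < 1 → 0 < ε →
    ∀ Lε Lζ : ℕ, 1 ≤ Lε → 1 ≤ Lζ →
    ((2 : ℝ) ^ (-(Lε : ℤ)) ≤ 0.01 * ε / H) →
    (∀ m : ℕ, 1 ≤ m → (2 : ℝ) ^ (-(m : ℤ)) ≤ 0.01 * ε / H → Lε ≤ m) →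
    (12 * Real.sqrt d * H * (Lζ : ℝ) ^ (1.5 : ℝ) * ζ ≤ (2 : ℝ) ^ (-(Lζ : ℤ))) →
    (∀ m : ℕ, 1 ≤ m → 12 * Real.sqrt d * H * (m : ℝ) ^ (1.5 : ℝ) * ζ ≤ (2 : ℝ) ^ (-(m : ℤ)) →
      m ≤ Lζ) →
    C * Real.sqrt d * H ^ 2 * ζ * (Real.logb 2 (1 / ζ)) ^ 2 ≤ ε →
    Lε ≤ Lζ := by
  refine ⟨9600, by norm_num, ?_⟩
  intro d H hd hH ζ ε hζ _ _ Lε Lζ _ hLζ _ hLε_min hLζ_le hLζ_max hε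
  apply hLε_min Lζ hLζ
  have hd' : (1 : ℝ) ≤ √d := one_le_sqrt.mpr (by exact_mod_cast hd)
  have hH' : (1 : ℝ) ≤ H := by exact_mod_cast hH
  have hχ : 1 ≤ 12 * √d * H := by nlinarith
  have hlog := natCast_le_logb_one_div_of_mul_rpow_le hχ hLζ hζ hLζ_le
  have hlt := two_zpow_neg_lt_of_maximal (by linarith) hLζ hζ hLζ_max
  rw [le_div_iff₀ (by positivity)]
  calc (2 : ℝ) ^ (-(Lζ : ℤ)) * H ≤ 8 * (12 * √d * H) * Lζ ^ 2 * ζ * H := by gcongr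
    _ = 0.01 * (9600 * √d * H ^ 2 * ζ * (Lζ : ℝ) ^ 2) := by ring
    _ ≤ 0.01 * (9600 * √d * H ^ 2 * ζ * logb 2 (1 / ζ) ^ 2) := by gcongr
    _ ≤ 0.01 * ε := by gcongr
end
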